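/- arXiv:2209.12021 — 4 statements merged into one kernel-verified Lean document; each statement's English description precedes it below -/
import Mathlib

section
/- Let ψ be a real number with 0 < ψ ≤ 1 and let s, z₁, w₁, θ be nonnegative reals with s + z₁ + θ ≥ 2/ψ. Then 3·(s + z₁ + ψ·θ) − (s + w₁ + 4) ≥ z₁ − w₁. -/
theorem stmt_5 (ψ s z₁ w₁ θ : ℝ)
    (hψ0 : 0 < ψ) (hψ1 : ψ ≤ 1)
    (hs : 0 ≤ s) (hz₁ : 0 ≤ z₁) (hw₁ : 0 ≤ w₁) (hθ : 0 ≤ θ)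
    (h : s + z₁ + θ ≥ 2/ψ) :
    3 * (s + z₁ + ψ * θ) - (s + w₁ + 4) ≥ z₁ - w₁ := by
  have h2 : ψ * (s + z₁ + θ) ≥ 2 := by
    have := (div_le_iff₀ hψ0).mp (le_of_eq rfl : (2:ℝ)/ψ ≤ 2/ψ)
    nlinarith [mul_le_mul_of_nonneg_left h (le_of_lt hψ0), (div_mul_cancel₀ (2:ℝ) (ne_of_gt hψ0))]
  nlinarith [mul_nonneg hψ0.le hθ, mul_le_mul_of_nonneg_right hψ1 (add_nonneg hs hz₁)]
end

section
/- Let m be a positive natural number, O, A, Of, On, δ, λ : ℕ → ℝ sequences, and b : ℕ → Bool with b 0 = false. Assume for every i with 1 ≤ i ≤ m: (a) 3·Of(i) − A(i) ≥ δ(i) − λ(i) − 3; (b) 3·On(i) − A(i) ≥ δ(i) − λ(i); (c) O(i) ≥ (if b(i) then On(i) else Of(i)) + (if b(i−1) then 0 else 1); and (d) Σ_{i=1}^{m} (δ(i) − λ(i)) = 0. Then Σ_{i=1}^{m} A(i) ≤ 3 · Σ_{i=1}^{m} O(i). -/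
theorem stmt_7 (m : ℕ) (hm : 0 < m)
    (O A Of On δ lam : ℕ → ℝ) (b : ℕ → Bool) (hb0 : b 0 = false)
    (ha : ∀ i, 1 ≤ i → i ≤ m → 3 * Of i - A i ≥ δ i - lam i - 3)
    (hb : ∀ i, 1 ≤ i → i ≤ m → 3 * On i - A i ≥ δ i - lam i)
    (hc : ∀ i, 1 ≤ i → i ≤ m →
      O i ≥ (if b i then On i else Of i) + (if b (i - 1) then 0 else 1))
    (hd : ∑ i ∈ Finset.Icc 1 m, (δ i - lam i) = 0) :
    ∑ i ∈ Finset.Icc 1 m, A i ≤ 3 * ∑ i ∈ Finset.Icc 1 m, O i := by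
  set g : ℕ → ℝ := fun j => if b j then 0 else 3 with hg
  -- Key per-phase bound
  have key : ∀ i ∈ Finset.Icc 1 m,
      A i ≤ 3 * (if b i then On i else Of i) + g i - (δ i - lam i) := by
    intro i hi
    simp only [Finset.mem_Icc] at hi
    by_cases h : b i
    · have := hb i hi.1 hi.2
      simp [hg, h]; linarith
    · have := ha i hi.1 hi.2
      simp [hg, h]; linarith
  have hsum : ∑ i ∈ Finset.Icc 1 m, A i ≤
      ∑ i ∈ Finset.Icc 1 m, (3 * (if b i then On i else Of i) + g i - (δ i - lam i)) :=
    Finset.sum_le_sum key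
  have hO : ∑ i ∈ Finset.Icc 1 m, (3 * (if b i then On i else Of i) + g (i - 1))
      ≤ 3 * ∑ i ∈ Finset.Icc 1 m, O i := by
    rw [Finset.mul_sum]
    apply Finset.sum_le_sum
    intro i hi
    simp only [Finset.mem_Icc] at hi
    have := hc i hi.1 hi.2
    by_cases h : b (i - 1) <;> by_cases h2 : b i <;> simp [hg, h, h2] at this ⊢ <;> linarith
  -- compare g sums via reindexing
  have hre : ∑ i ∈ Finset.Icc 1 m, g (i - 1) = ∑ j ∈ Finset.Icc 0 (m - 1), g j := by
    have : Finset.Icc 1 m = (Finset.Icc 0 (m - 1)).map (addRightEmbedding 1) := by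
      rw [Finset.map_add_right_Icc]
      congr 1
      omega
    rw [this, Finset.sum_map]
    apply Finset.sum_congr rfl
    intro j hj
    simp [addRightEmbedding]
  have hgle : ∑ i ∈ Finset.Icc 1 m, g i ≤ ∑ i ∈ Finset.Icc 1 m, g (i - 1) := by
    rw [hre]
    have h1 : Finset.Icc 0 (m - 1) = insert 0 (Finset.Icc 1 (m - 1)) := by
      ext x; simp [Finset.mem_Icc]; omega
    have h2 : Finset.Icc 1 m = insert m (Finset.Icc 1 (m - 1)) := by
      ext x; simp [Finset.mem_Icc]; omega
    rw [h1, h2, Finset.sum_insert (by simp; omega), Finset.sum_insert (by simp)]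
    have : g 0 = 3 := by simp [hg, hb0]
    have hm' : g m ≤ 3 := by by_cases h : b m <;> simp [hg, h]
    linarith
  have expand : ∑ i ∈ Finset.Icc 1 m, (3 * (if b i then On i else Of i) + g i - (δ i - lam i))
      = ∑ i ∈ Finset.Icc 1 m, (3 * (if b i then On i else Of i)) + ∑ i ∈ Finset.Icc 1 m, g i := by
    rw [Finset.sum_sub_distrib, hd, sub_zero, Finset.sum_add_distrib]
  have expand2 : ∑ i ∈ Finset.Icc 1 m, (3 * (if b i then On i else Of i) + g (i - 1))
      = ∑ i ∈ Finset.Icc 1 m, (3 * (if b i then On i else Of i)) + ∑ i ∈ Finset.Icc 1 m, g (i-1) := by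
    rw [Finset.sum_add_distrib]
  linarith [hsum, hO, hgle, expand, expand2]
end

section
/- For all real numbers x₁, w₁, x₂, w₂ with 0 ≤ x₁ ≤ 0.4745 and w₁, x₂, w₂ ≥ 0, at least one of the following four quantities is ≥ 2.1: (2 + x₁ + w₁)/(1 + x₁), (3 + x₁ + w₁ + x₂)/(1 + x₁ + w₁), (4 + x₁ + w₁ + x₂ + w₂)/(2 + x₁ + x₂), (5 + x₁ + w₁ + x₂ + w₂)/(2 + x₁ + x₂ + w₂). -/
theorem stmt_10 (x₁ w₁ x₂ w₂ : ℝ)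
    (hx₁0 : 0 ≤ x₁) (hx₁ : x₁ ≤ 0.4745)
    (hw₁ : 0 ≤ w₁) (hx₂ : 0 ≤ x₂) (hw₂ : 0 ≤ w₂) :
    (2 + x₁ + w₁) / (1 + x₁) ≥ 2.1 ∨
    (3 + x₁ + w₁ + x₂) / (1 + x₁ + w₁) ≥ 2.1 ∨
    (4 + x₁ + w₁ + x₂ + w₂) / (2 + x₁ + x₂) ≥ 2.1 ∨
    (5 + x₁ + w₁ + x₂ + w₂) / (2 + x₁ + x₂ + w₂) ≥ 2.1 := by
  by_contra h
  push_neg at h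
  obtain ⟨h1, h2, h3, h4⟩ := h
  have d1 : (0:ℝ) < 1 + x₁ := by linarith
  have d2 : (0:ℝ) < 1 + x₁ + w₁ := by linarith
  have d3 : (0:ℝ) < 2 + x₁ + x₂ := by linarith
  have d4 : (0:ℝ) < 2 + x₁ + x₂ + w₂ := by linarith
  rw [div_lt_iff₀ d1] at h1
  rw [div_lt_iff₀ d2] at h2
  rw [div_lt_iff₀ d3] at h3
  rw [div_lt_iff₀ d4] at h4
  norm_num at h1 h2 h3 h4 hx₁
  nlinarith [h1, h2, h3, h4, hx₁, hx₁0, hw₁, hx₂, hw₂]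
end

section
/- For all real numbers x₁, y₁, x₂, y₂ with x₁ ≥ 0.4745 and y₁, x₂, y₂ ≥ 0, at least one of the following four quantities is ≥ 2.1: 1 + x₁ + y₁, (2 + x₁ + y₁ + x₂)/(1 + y₁), (3 + x₁ + y₁ + x₂ + y₂)/(2 + x₂), (4 + x₁ + y₁ + x₂ + y₂)/(2 + x₂ + y₂). -/
theorem stmt_11 (x₁ y₁ x₂ y₂ : ℝ)
    (hx₁ : x₁ ≥ 0.4745)
    (hy₁ : 0 ≤ y₁) (hx₂ : 0 ≤ x₂) (hy₂ : 0 ≤ y₂) :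
    1 + x₁ + y₁ ≥ 2.1 ∨
    (2 + x₁ + y₁ + x₂) / (1 + y₁) ≥ 2.1 ∨
    (3 + x₁ + y₁ + x₂ + y₂) / (2 + x₂) ≥ 2.1 ∨
    (4 + x₁ + y₁ + x₂ + y₂) / (2 + x₂ + y₂) ≥ 2.1 := by
  by_contra h
  push_neg at h
  obtain ⟨h1, h2, h3, h4⟩ := h
  have d1 : (0:ℝ) < 1 + y₁ := by linarith
  have d2 : (0:ℝ) < 2 + x₂ := by linarith
  have d3 : (0:ℝ) < 2 + x₂ + y₂ := by linarith
  rw [div_lt_iff₀ d1] at h2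
  rw [div_lt_iff₀ d2] at h3
  rw [div_lt_iff₀ d3] at h4
  norm_num at *
  linarith
end
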